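/- arXiv:1912.09836 — 7 statements merged into one kernel-verified Lean document; each statement's English description precedes it below -/
import Mathlib

section
/- Let u₁ : P → Q₁ and u₂ : P → Q₂ be homomorphisms of commutative monoids, and suppose that at least one of P, Q₁, Q₂ is a group. Then the natural map Q₁ / P → (Q₁ ⊕_P Q₂) / Q₂ is an isomorphism, where Q₁ ⊕_P Q₂ denotes the amalgamated sum (pushout) of monoids and the quotients are cokernels of the canonical maps. -/
/-- The cokernel congruence of a homomorphism `u : P →+ Q` of commutative monoids:
`q₁ ~ q₂` iff there exist `p₁ p₂ : P` with `u p₁ + q₁ = u p₂ + q₂`. -/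
def cokerCon {P Q : Type*} [AddCommMonoid P] [AddCommMonoid Q] (u : P →+ Q) : AddCon Q :=
  addConGen (fun q₁ q₂ => ∃ p₁ p₂ : P, u p₁ + q₁ = u p₂ + q₂)

/-- The amalgamated sum `Q₁ ⊕_P Q₂` of two homomorphisms `u₁ : P →+ Q₁`, `u₂ : P →+ Q₂`:
the coequalizer of the two maps `P ⇉ Q₁ ⊕ Q₂` given by `(u₁, 0)` and `(0, u₂)`. -/
def amalgCon {P Q₁ Q₂ : Type*} [AddCommMonoid P] [AddCommMonoid Q₁] [AddCommMonoid Q₂]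
    (u₁ : P →+ Q₁) (u₂ : P →+ Q₂) : AddCon (Q₁ × Q₂) :=
  addConGen (fun a b => ∃ p : P, a = (u₁ p, 0) ∧ b = (0, u₂ p))

/-- The cokernel relation is already a congruence. -/
def cokerAddCon {P Q : Type*} [AddCommMonoid P] [AddCommMonoid Q] (u : P →+ Q) : AddCon Q where
  r q₁ q₂ := ∃ p₁ p₂ : P, u p₁ + q₁ = u p₂ + q₂
  iseqv := by
    refine ⟨fun q => ⟨0, 0, rfl⟩, ?_, ?_⟩
    · rintro x y ⟨p₁, p₂, h⟩; exact ⟨p₂, p₁, h.symm⟩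
    · rintro x y z ⟨p₁, p₂, h⟩ ⟨r₁, r₂, h'⟩
      refine ⟨p₁ + r₁, p₂ + r₂, ?_⟩
      have : u r₁ + (u p₁ + x) = u p₂ + (u r₁ + y) := by rw [h, add_left_comm]
      rw [h'] at this
      rw [map_add, map_add]
      calc u p₁ + u r₁ + x = u r₁ + (u p₁ + x) := by rw [add_left_comm, add_assoc]
        _ = u p₂ + (u r₂ + z) := this
        _ = u p₂ + u r₂ + z := by rw [add_assoc]
  add' := by
    rintro w x y z ⟨p₁, p₂, h⟩ ⟨r₁, r₂, h'⟩
    refine ⟨p₁ + r₁, p₂ + r₂, ?_⟩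
    rw [map_add, map_add]
    calc u p₁ + u r₁ + (w + y) = (u p₁ + w) + (u r₁ + y) := by
          rw [add_add_add_comm]
      _ = (u p₂ + x) + (u r₂ + z) := by rw [h, h']
      _ = u p₂ + u r₂ + (x + z) := by rw [add_add_add_comm]

theorem cokerCon_eq {P Q : Type*} [AddCommMonoid P] [AddCommMonoid Q] (u : P →+ Q) :
    cokerCon u = cokerAddCon u := by
  refine le_antisymm (AddCon.addConGen_le.2 fun x y h => h) fun x y h => ?_
  exact AddConGen.Rel.of x y h

/-- An explicit congruence containing the amalgamation generators. -/
def amalgR {P Q₁ Q₂ : Type*} [AddCommMonoid P] [AddCommMonoid Q₁] [AddCommMonoid Q₂]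
    (u₁ : P →+ Q₁) (u₂ : P →+ Q₂) : AddCon (Q₁ × Q₂) where
  r a b := ∃ p p' : P, a.1 + u₁ p = b.1 + u₁ p' ∧ a.2 + u₂ p' = b.2 + u₂ p
  iseqv := by
    refine ⟨fun a => ⟨0, 0, rfl, rfl⟩, ?_, ?_⟩
    · rintro a b ⟨p, p', h1, h2⟩; exact ⟨p', p, h1.symm, h2.symm⟩
    · rintro a b c ⟨p, p', h1, h2⟩ ⟨r, r', h3, h4⟩
      refine ⟨p + r, p' + r', ?_, ?_⟩
      · rw [map_add, map_add]
        calc a.1 + (u₁ p + u₁ r) = (a.1 + u₁ p) + u₁ r := by rw [add_assoc]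
          _ = u₁ p' + (b.1 + u₁ r) := by rw [h1, add_assoc, add_left_comm]
          _ = u₁ p' + (c.1 + u₁ r') := by rw [h3]
          _ = c.1 + (u₁ p' + u₁ r') := by rw [add_left_comm]
      · rw [map_add, map_add]
        calc a.2 + (u₂ p' + u₂ r') = (a.2 + u₂ p') + u₂ r' := by rw [add_assoc]
          _ = u₂ p + (b.2 + u₂ r') := by rw [h2, add_assoc, add_left_comm]
          _ = u₂ p + (c.2 + u₂ r) := by rw [h4]
          _ = c.2 + (u₂ p + u₂ r) := by rw [add_left_comm]
  add' := by
    rintro a b c d ⟨p, p', h1, h2⟩ ⟨r, r', h3, h4⟩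
    refine ⟨p + r, p' + r', ?_, ?_⟩
    · show a.1 + c.1 + u₁ (p + r) = b.1 + d.1 + u₁ (p' + r')
      rw [map_add, map_add, add_add_add_comm, h1, h3, add_add_add_comm]
    · show a.2 + c.2 + u₂ (p' + r') = b.2 + d.2 + u₂ (p + r)
      rw [map_add, map_add, add_add_add_comm, h2, h4, add_add_add_comm]

theorem amalgCon_le {P Q₁ Q₂ : Type*} [AddCommMonoid P] [AddCommMonoid Q₁] [AddCommMonoid Q₂]
    (u₁ : P →+ Q₁) (u₂ : P →+ Q₂) : amalgCon u₁ u₂ ≤ amalgR u₁ u₂ := by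
  apply AddCon.addConGen_le.2
  rintro a b ⟨p, rfl, rfl⟩
  exact ⟨0, p, by simp, by simp⟩

/-- Lemma 2.4 (`lem-amalg-sum`): if any of `P`, `Q₁`, `Q₂` is a group, the natural map
`Q₁ / P → (Q₁ ⊕_P Q₂) / Q₂` is an isomorphism. -/
theorem stmt0 {P Q₁ Q₂ : Type} [AddCommMonoid P] [AddCommMonoid Q₁] [AddCommMonoid Q₂]
    (u₁ : P →+ Q₁) (u₂ : P →+ Q₂)
    (hgrp : (∀ p : P, ∃ p', p + p' = 0) ∨ (∀ q : Q₁, ∃ q', q + q' = 0) ∨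
      (∀ q : Q₂, ∃ q', q + q' = 0))
    -- the canonical inclusions of `Q₁` and `Q₂` into the amalgamated sum
    (ι₁ : Q₁ →+ (amalgCon u₁ u₂).Quotient) (ι₂ : Q₂ →+ (amalgCon u₁ u₂).Quotient)
    (hι₁ : ι₁ = (AddCon.mk' (amalgCon u₁ u₂)).comp (AddMonoidHom.inl Q₁ Q₂))
    (hι₂ : ι₂ = (AddCon.mk' (amalgCon u₁ u₂)).comp (AddMonoidHom.inr Q₁ Q₂)) :
    ∃ f : (cokerCon u₁).Quotient →+ (cokerCon ι₂).Quotient,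
      (∀ q : Q₁, f ((cokerCon u₁).mk' q) = (cokerCon ι₂).mk' (ι₁ q)) ∧
      Function.Bijective f := by
  -- key computation: ι₂ a + ι₁ q = mk' (q, a)
  have key : ∀ (q : Q₁) (a : Q₂),
      ι₂ a + ι₁ q = (amalgCon u₁ u₂).mk' (q, a) := by
    intro q a
    rw [hι₁, hι₂]
    simp only [AddMonoidHom.comp_apply, AddMonoidHom.inl_apply, AddMonoidHom.inr_apply]
    rw [← map_add]
    congr 1
    simp
  -- the generators of the amalgamated congruence
  have gen : ∀ p : P, ι₁ (u₁ p) = ι₂ (u₂ p) := by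
    intro p
    rw [hι₁, hι₂]
    simp only [AddMonoidHom.comp_apply, AddMonoidHom.inl_apply, AddMonoidHom.inr_apply]
    exact (AddCon.eq _).2 (AddConGen.Rel.of _ _ ⟨p, rfl, rfl⟩)
  set g : Q₁ →+ (cokerCon ι₂).Quotient := (AddCon.mk' (cokerCon ι₂)).comp ι₁ with hg
  have hker : cokerCon u₁ ≤ AddCon.ker g := by
    apply AddCon.addConGen_le.2
    rintro q q' ⟨p₁, p₂, h⟩
    show g q = g q'
    simp only [hg, AddMonoidHom.comp_apply, AddCon.coe_mk']
    refine (AddCon.eq _).2 (AddConGen.Rel.of _ _ ⟨u₂ p₁, u₂ p₂, ?_⟩)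
    rw [← gen, ← gen, ← map_add, ← map_add, h]
  refine ⟨(cokerCon u₁).lift g hker, fun q => ?_, ?_, ?_⟩
  · simp [g]
  · -- injective
    intro x y
    refine AddCon.induction_on₂ x y fun q q' h => ?_
    have h' : cokerCon ι₂ (ι₁ q) (ι₁ q') := (AddCon.eq _).1 h
    rw [cokerCon_eq] at h'
    obtain ⟨a, a', ha⟩ := h'
    rw [key, key] at ha
    have h2 : (amalgR u₁ u₂) (q, a) (q', a') :=
      amalgCon_le u₁ u₂ ((AddCon.eq _).1 (by simpa using ha))
    obtain ⟨p, p', h3, _⟩ := h2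
    refine (AddCon.eq _).2 (AddConGen.Rel.of _ _ ⟨p, p', ?_⟩)
    rw [add_comm (u₁ p), add_comm (u₁ p')]
    exact h3
  · -- surjective
    intro x
    refine AddCon.induction_on x fun z => ?_
    refine AddCon.induction_on z fun (w : Q₁ × Q₂) => ?_
    refine ⟨(cokerCon u₁).mk' w.1, ?_⟩
    show g w.1 = _
    simp only [hg, AddMonoidHom.comp_apply, AddCon.coe_mk']
    refine (AddCon.eq _).2 (AddConGen.Rel.of _ _ ⟨w.2, 0, ?_⟩)
    rw [map_zero, zero_add, key]
    rfl
end

section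
/- Let P be an integral commutative monoid and u : P → Q a surjective monoid homomorphism onto a toric (sharp, fine, saturated) monoid Q, such that the kernel of the induced map u^gp : P^gp → Q^gp is contained in P (viewed as a submonoid of P^gp). Then u admits a section, i.e., a monoid homomorphism s : Q → P with u ∘ s = id. -/
/-- Lemma 2.8 (`lem-monoid-split`): let `P` be an integral commutative monoid, realized as a
submonoid of its group completion `G = P^gp`, and let `u : P → Q` be a surjective homomorphism
onto a toric (sharp, fine, saturated) monoid `Q`, realized inside `H = Q^gp`; `u` is induced by
`u^gp = φ : G →+ H`.  If `ker (u^gp) ⊆ P`, then `u` admits a section. -/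
theorem stmt2 {G H : Type} [AddCommGroup G] [AddCommGroup H]
    (P : AddSubmonoid G) (Q : AddSubmonoid H)
    -- `G` is the group completion of `P`, `H` that of `Q`
    (hPgen : AddSubgroup.closure (P : Set G) = ⊤)
    (hQgen : AddSubgroup.closure (Q : Set H) = ⊤)
    -- `Q` is toric: sharp, finitely generated, saturated
    (hQsharp : ∀ q ∈ Q, -q ∈ Q → q = 0)
    (hQfg : Q.FG)
    (hQsat : ∀ a : H, ∀ n : ℕ, 1 ≤ n → n • a ∈ Q → a ∈ Q)
    -- `φ = u^gp` induces a surjective homomorphism `u : P → Q`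
    (φ : G →+ H)
    (hmaps : ∀ p ∈ P, φ p ∈ Q)
    (hsurj : ∀ q ∈ Q, ∃ p ∈ P, φ p = q)
    -- `ker (u^gp) ⊆ P`
    (hker : ∀ g : G, φ g = 0 → g ∈ P) :
    ∃ s : Q →+ P, ∀ q : Q, φ ((s q : G)) = (q : H) := by
  -- H is a finitely generated group
  have hHfg : AddGroup.FG H := by
    obtain ⟨S, hS⟩ := hQfg
    refine ⟨⟨S, ?_⟩⟩
    rw [← top_le_iff, ← hQgen, AddSubgroup.closure_le]
    intro x hx
    rw [← hS] at hx
    have hle : AddSubmonoid.closure (S : Set H) ≤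
        (AddSubgroup.closure (S : Set H)).toAddSubmonoid :=
      AddSubmonoid.closure_le.mpr AddSubgroup.subset_closure
    exact hle hx
  have hfin : Module.Finite ℤ H := Module.Finite.iff_addGroup_fg.mpr hHfg
  -- H is torsion-free
  have htf : NoZeroSMulDivisors ℤ H := by
    refine ⟨fun {c x} hcx => ?_⟩
    by_cases hc : c = 0
    · exact Or.inl hc
    · right
      have hn : (c.natAbs : ℕ) • x = 0 ∨ (c.natAbs : ℕ) • (-x) = 0 := by
        rcases Int.natAbs_eq c with h | h
        · left
          have : ((c.natAbs : ℤ)) • x = 0 := by rw [← h]; exact hcx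
          simpa [natCast_zsmul] using this
        · right
          have : ((c.natAbs : ℤ)) • (-x) = 0 := by
            rw [smul_neg, ← neg_smul, ← h]; exact hcx
          simpa [natCast_zsmul] using this
      have h1 : 1 ≤ c.natAbs := Nat.one_le_iff_ne_zero.mpr (Int.natAbs_ne_zero.mpr hc)
      have hxQ : x ∈ Q ∧ -x ∈ Q := by
        rcases hn with h | h
        · constructor
          · exact hQsat x c.natAbs h1 (by rw [h]; exact Q.zero_mem)
          · exact hQsat (-x) c.natAbs h1
              (by rw [smul_neg, h, neg_zero]; exact Q.zero_mem)
        · constructor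
          · exact hQsat x c.natAbs h1
              (by rw [← neg_neg x, smul_neg, h, neg_zero]; exact Q.zero_mem)
          · exact hQsat (-x) c.natAbs h1 (by rw [h]; exact Q.zero_mem)
      exact hQsharp x hxQ.1 hxQ.2
  have hfree : Module.Free ℤ H := Module.free_of_finite_type_torsion_free'
  have hproj : Module.Projective ℤ H := Module.Projective.of_free
  -- φ is surjective
  have hφsurj : Function.Surjective φ := by
    intro h
    have : (φ.range : AddSubgroup H) = ⊤ := by
      rw [← top_le_iff, ← hQgen, AddSubgroup.closure_le]
      intro x hx
      obtain ⟨p, _, hp⟩ := hsurj x hx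
      exact ⟨p, hp⟩
    have := this ▸ AddSubgroup.mem_top h
    exact this
  -- lift the identity along φ
  obtain ⟨σ, hσ⟩ := Module.projective_lifting_property φ.toIntLinearMap
    (LinearMap.id : H →ₗ[ℤ] H) hφsurj
  have hσ' : ∀ h : H, φ (σ h) = h := fun h => congrArg (· h) hσ
  -- σ maps Q into P
  have hσQ : ∀ q ∈ Q, σ q ∈ P := by
    intro q hq
    obtain ⟨p, hp, hpq⟩ := hsurj q hq
    have hk : σ q - p ∈ P := by
      apply hker
      rw [map_sub, hσ' q, hpq, sub_self]
    have := P.add_mem hk hp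
    rwa [sub_add_cancel] at this
  refine ⟨{ toFun := fun q => ⟨σ q, hσQ q q.2⟩,
            map_zero' := by ext; simp,
            map_add' := fun a b => by ext; simp }, ?_⟩
  intro q
  exact hσ' q
end

section
/- For any fine saturated (fs) commutative monoid P, the canonical projection P → P̄ = P / P* admits a section, i.e., there is a monoid homomorphism s : P̄ → P with (P → P̄) ∘ s = id. -/
/-- Relations defining the group completion of a commutative monoid `M`:
`[a + b] = [a] + [b]` and `[0] = 0`. -/
def grothRel (M : Type*) [AddCommMonoid M] : AddSubgroup (FreeAbelianGroup M) :=
  AddSubgroup.closure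
    ({x | ∃ a b : M, x = FreeAbelianGroup.of (a + b) - FreeAbelianGroup.of a - FreeAbelianGroup.of b}
      ∪ {FreeAbelianGroup.of (0 : M)})

/-- The group completion `M^gp` of a commutative monoid `M`. -/
def Groth (M : Type*) [AddCommMonoid M] : Type _ := FreeAbelianGroup M ⧸ grothRel M

noncomputable instance (M : Type*) [AddCommMonoid M] : AddCommGroup (Groth M) :=
  QuotientAddGroup.Quotient.addCommGroup (grothRel M)

/-- The canonical homomorphism `M → M^gp`. -/
noncomputable def grothHom (M : Type*) [AddCommMonoid M] : M →+ Groth M where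
  toFun m := QuotientAddGroup.mk (FreeAbelianGroup.of m)
  map_zero' := by
    show (QuotientAddGroup.mk (FreeAbelianGroup.of (0 : M)) : FreeAbelianGroup M ⧸ grothRel M) = 0
    rw [QuotientAddGroup.eq_zero_iff]
    exact AddSubgroup.subset_closure (Or.inr rfl)
  map_add' a b := by
    have key : (QuotientAddGroup.mk (FreeAbelianGroup.of (a + b)) : FreeAbelianGroup M ⧸ grothRel M) =
        QuotientAddGroup.mk (FreeAbelianGroup.of a) + QuotientAddGroup.mk (FreeAbelianGroup.of b) := by
      rw [← QuotientAddGroup.mk_add, QuotientAddGroup.eq]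
      have : FreeAbelianGroup.of (a + b) - FreeAbelianGroup.of a - FreeAbelianGroup.of b ∈
          grothRel M := AddSubgroup.subset_closure (Or.inl ⟨a, b, rfl⟩)
      have := (grothRel M).neg_mem this
      convert this using 1
      abel
    exact key

/-- A commutative monoid is integral if the canonical map to its group completion is
injective. -/
def IsIntegralMonoid (M : Type*) [AddCommMonoid M] : Prop := Function.Injective (grothHom M)

/-- An integral commutative monoid is saturated if every `a ∈ M^gp` with `n • a ∈ M` for some
`n ≥ 1` lies in `M`. -/
def IsSaturatedMonoid (M : Type*) [AddCommMonoid M] : Prop :=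
  IsIntegralMonoid M ∧ ∀ a : Groth M, (∃ n : ℕ, 1 ≤ n ∧ n • a ∈ Set.range (grothHom M)) →
    a ∈ Set.range (grothHom M)

/-- A commutative monoid is sharp if its only invertible element is `0`. -/
def IsSharpMonoid (M : Type*) [AddCommMonoid M] : Prop :=
  ∀ x : M, (∃ y, x + y = 0) → x = 0

/-- The quotient of a commutative monoid `P` by a submonoid `N`: the cokernel of the
inclusion, i.e. `p₁ ~ p₂` iff `p₁ + n₁ = p₂ + n₂` for some `n₁, n₂ ∈ N`. -/
def quotBySubmonoid {P : Type*} [AddCommMonoid P] (N : AddSubmonoid P) : Type _ :=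
  (addConGen (fun p₁ p₂ : P => ∃ n₁ ∈ N, ∃ n₂ ∈ N, p₁ + n₁ = p₂ + n₂)).Quotient

noncomputable instance {P : Type*} [AddCommMonoid P] (N : AddSubmonoid P) :
    AddCommMonoid (quotBySubmonoid N) :=
  AddCon.addCommMonoid _

/-- The submonoid `P*` of invertible elements of a commutative monoid `P`. -/
def unitsSubmonoid (P : Type*) [AddCommMonoid P] : AddSubmonoid P where
  carrier := {x | ∃ y, x + y = 0}
  zero_mem' := ⟨0, add_zero 0⟩
  add_mem' := by
    rintro a b ⟨a', ha⟩ ⟨b', hb⟩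
    exact ⟨a' + b', by rw [add_add_add_comm, ha, hb, add_zero]⟩



section Aux

variable {P : Type} [AddCommMonoid P]

lemma groth_closure_range :
    AddSubgroup.closure (Set.range (grothHom P)) = (⊤ : AddSubgroup (Groth P)) := by
  rw [eq_top_iff]
  intro x hx
  clear hx
  obtain ⟨y, rfl⟩ := QuotientAddGroup.mk_surjective x
  induction y using FreeAbelianGroup.induction_on with
  | zero => exact AddSubgroup.zero_mem _
  | of p => exact AddSubgroup.subset_closure ⟨p, rfl⟩
  | neg p hp =>
      rw [show (QuotientAddGroup.mk (-FreeAbelianGroup.of p) : Groth P) =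
        -(QuotientAddGroup.mk (FreeAbelianGroup.of p)) from rfl]
      exact AddSubgroup.neg_mem _ hp
  | add a b ha hb =>
      rw [show (QuotientAddGroup.mk (a + b) : Groth P) =
        QuotientAddGroup.mk a + QuotientAddGroup.mk b from rfl]
      exact AddSubgroup.add_mem _ ha hb

/-- The image of the units of `P` in `Groth P`, as a subgroup. -/
def grothUnits (P : Type) [AddCommMonoid P] : AddSubgroup (Groth P) where
  carrier := grothHom P '' (unitsSubmonoid P)
  zero_mem' := ⟨0, ⟨0, add_zero 0⟩, map_zero _⟩
  add_mem' := by
    rintro _ _ ⟨a, ha, rfl⟩ ⟨b, hb, rfl⟩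
    exact ⟨a + b, (unitsSubmonoid P).add_mem ha hb, map_add _ _ _⟩
  neg_mem' := by
    rintro _ ⟨a, ⟨b, hb⟩, rfl⟩
    refine ⟨b, ⟨a, by rwa [add_comm]⟩, ?_⟩
    have h : grothHom P a + grothHom P b = 0 := by
      rw [← map_add, hb, map_zero]
    exact eq_neg_of_add_eq_zero_right h

/-- `Groth P` is a finitely generated group when `P` is a finitely generated monoid. -/
lemma groth_fg (hfg : AddMonoid.FG P) : AddGroup.FG (Groth P) := by
  obtain ⟨S, hS, hSfin⟩ := AddMonoid.fg_iff.mp hfg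
  rw [AddGroup.fg_iff]
  refine ⟨grothHom P '' S, ?_, hSfin.image _⟩
  rw [eq_top_iff, ← groth_closure_range]
  rw [AddSubgroup.closure_le]
  rintro _ ⟨p, rfl⟩
  have hp : p ∈ AddSubmonoid.closure S := hS ▸ AddSubmonoid.mem_top p
  induction hp using AddSubmonoid.closure_induction with
  | mem x hx => exact AddSubgroup.subset_closure ⟨x, hx, rfl⟩
  | zero => rw [map_zero]; exact AddSubgroup.zero_mem _
  | add a b _ _ ha hb => rw [map_add]; exact AddSubgroup.add_mem _ ha hb

end Aux

/-- Lemma 2.8 (`lem-monoid-split`, second part): for any fs (fine saturated) commutative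
monoid `P`, the canonical projection `P → P̄ = P / P*` admits a section. -/
theorem stmt3 {P : Type} [AddCommMonoid P]
    (hfg : AddMonoid.FG P) (hint : IsIntegralMonoid P) (hsat : IsSaturatedMonoid P) :
    ∃ s : quotBySubmonoid (unitsSubmonoid P) →+ P,
      ∀ x : quotBySubmonoid (unitsSubmonoid P),
        (addConGen (fun p₁ p₂ : P =>
          ∃ n₁ ∈ unitsSubmonoid P, ∃ n₂ ∈ unitsSubmonoid P, p₁ + n₁ = p₂ + n₂)).mk' (s x) = x := by
  classical
  obtain ⟨-, hsat'⟩ := hsat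
  have hinj : Function.Injective (grothHom P) := hint
  set U := grothUnits P with hUdef
  -- finiteness and torsion-freeness of the quotient `Groth P ⧸ U`
  haveI h1 : AddGroup.FG (Groth P) := groth_fg hfg
  haveI h2 : AddGroup.FG (Groth P ⧸ U) :=
    AddGroup.fg_of_surjective (QuotientAddGroup.mk'_surjective U)
  haveI h3 : Module.Finite ℤ (Groth P ⧸ U) := Module.Finite.iff_addGroup_fg.mpr h2
  haveI h4 : NoZeroSMulDivisors ℤ (Groth P ⧸ U) := by
    constructor
    intro c x hcx
    by_cases hc : c = 0
    · exact Or.inl hc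
    right
    obtain ⟨a, rfl⟩ := QuotientAddGroup.mk'_surjective U x
    have hc1 : 1 ≤ c.natAbs := Int.natAbs_pos.mpr hc
    have hz : ((c.natAbs : ℤ)) • (QuotientAddGroup.mk' U a) = 0 := by
      rcases Int.natAbs_eq c with h | h
      · rw [← h, hcx]
      · rw [show ((c.natAbs : ℤ)) = -c by omega, neg_zsmul, hcx, neg_zero]
    have hsm : c.natAbs • (QuotientAddGroup.mk' U a) = 0 := by
      rw [← natCast_zsmul]; exact hz
    have hmem : c.natAbs • a ∈ U := by
      have : QuotientAddGroup.mk' U (c.natAbs • a) = 0 := by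
        rw [map_nsmul]; exact hsm
      rwa [QuotientAddGroup.mk'_apply, QuotientAddGroup.eq_zero_iff] at this
    obtain ⟨w, hw, hwa⟩ := hmem
    obtain ⟨v, hv⟩ := hw
    have ha1 : a ∈ Set.range (grothHom P) :=
      hsat' a ⟨c.natAbs, hc1, ⟨w, hwa⟩⟩
    have hvw : grothHom P w + grothHom P v = 0 := by rw [← map_add, hv, map_zero]
    have ha2 : (-a) ∈ Set.range (grothHom P) := by
      refine hsat' (-a) ⟨c.natAbs, hc1, ⟨v, ?_⟩⟩
      rw [smul_neg, ← hwa]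
      exact eq_neg_of_add_eq_zero_right hvw
    obtain ⟨p, hp⟩ := ha1
    obtain ⟨q, hq⟩ := ha2
    have hpq : p + q = 0 := by
      apply hinj
      rw [map_add, hp, hq, map_zero, add_neg_cancel]
    have haU : a ∈ U := ⟨p, ⟨q, hpq⟩, hp⟩
    rw [QuotientAddGroup.mk'_apply, QuotientAddGroup.eq_zero_iff]
    exact haU
  haveI h5 : Module.Free ℤ (Groth P ⧸ U) := Module.free_of_finite_type_torsion_free'
  -- split the quotient map
  obtain ⟨σ, hσ⟩ := Module.projective_lifting_property
    ((QuotientAddGroup.mk' U).toIntLinearMap) (LinearMap.id)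
    (QuotientAddGroup.mk'_surjective U)
  have hσ' : ∀ y : Groth P ⧸ U, QuotientAddGroup.mk' U (σ y) = y := fun y =>
    LinearMap.congr_fun hσ y
  -- the key lifting property
  have key : ∀ p : P, ∃ u ∈ unitsSubmonoid P,
      σ (QuotientAddGroup.mk' U (grothHom P p)) = grothHom P (p + u) := by
    intro p
    have h1 : QuotientAddGroup.mk' U (σ (QuotientAddGroup.mk' U (grothHom P p))) =
        QuotientAddGroup.mk' U (grothHom P p) := hσ' _
    rw [QuotientAddGroup.mk'_eq_mk'] at h1
    obtain ⟨z, hz, hze⟩ := h1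
    rw [hUdef] at hz
    obtain ⟨w, hw, rfl⟩ := hz
    obtain ⟨w', hw'⟩ := hw
    refine ⟨w', ⟨w, by rwa [add_comm]⟩, ?_⟩
    have hww' : grothHom P w + grothHom P w' = 0 := by rw [← map_add, hw', map_zero]
    rw [map_add]
    have hneg : grothHom P w' = -(grothHom P w) := eq_neg_of_add_eq_zero_right hww'
    have h2 : σ (QuotientAddGroup.mk' U (grothHom P p)) = grothHom P p - grothHom P w :=
      eq_sub_of_add_eq hze
    rw [hneg, h2]
    abel
  choose u hu hval using key
  -- the section as a map `P → P`
  have t0 : (0 : P) + u 0 = 0 := by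
    apply hinj
    rw [← hval 0]
    simp only [map_zero]
  have tadd : ∀ a b : P, (a + b) + u (a + b) = (a + u a) + (b + u b) := by
    intro a b
    apply hinj
    rw [← hval (a + b), map_add (grothHom P), map_add (QuotientAddGroup.mk' U),
      map_add σ, hval a, hval b]
    simp only [map_add]
  set tHom : P →+ P :=
    { toFun := fun p => p + u p, map_zero' := t0, map_add' := tadd } with htHom
  have tconst : ∀ p₁ p₂ : P,
      (∃ n₁ ∈ unitsSubmonoid P, ∃ n₂ ∈ unitsSubmonoid P, p₁ + n₁ = p₂ + n₂) →
      tHom p₁ = tHom p₂ := by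
    rintro p₁ p₂ ⟨n₁, hn₁, n₂, hn₂, heq⟩
    show p₁ + u p₁ = p₂ + u p₂
    apply hinj
    rw [← hval p₁, ← hval p₂]
    congr 1
    rw [QuotientAddGroup.mk'_eq_mk']
    refine ⟨grothHom P n₁ - grothHom P n₂,
      AddSubgroup.sub_mem _ ⟨n₁, hn₁, rfl⟩ ⟨n₂, hn₂, rfl⟩, ?_⟩
    have hg : grothHom P p₁ + grothHom P n₁ = grothHom P p₂ + grothHom P n₂ := by
      rw [← map_add, ← map_add, heq]
    rw [add_sub, sub_eq_iff_eq_add, hg]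
  refine ⟨AddCon.lift _ tHom (AddCon.addConGen_le.mpr fun x y hxy => tconst x y hxy), ?_⟩
  have hgoal : ∀ q : P, (addConGen (fun p₁ p₂ : P =>
      ∃ n₁ ∈ unitsSubmonoid P, ∃ n₂ ∈ unitsSubmonoid P, p₁ + n₁ = p₂ + n₂)).mk' (tHom q) =
      (addConGen (fun p₁ p₂ : P =>
      ∃ n₁ ∈ unitsSubmonoid P, ∃ n₂ ∈ unitsSubmonoid P, p₁ + n₁ = p₂ + n₂)).mk' q := by
    intro q
    exact (AddCon.eq _).mpr (AddConGen.Rel.of _ _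
      ⟨0, (unitsSubmonoid P).zero_mem, u q, hu q,
        by show (q + u q) + 0 = q + u q; exact add_zero _⟩)
  intro x
  obtain ⟨p, rfl⟩ := AddCon.mk'_surjective x
  exact hgoal p
end

section
/- Let P → Q be a Kummer homomorphism of fine saturated (fs) monoids and P → R any homomorphism of fs monoids. Then the induced homomorphism R → (R ⊕_P Q)^sat into the saturation of the amalgamated sum is also Kummer. -/
section PushoutSat

variable {G_P G_Q G_R : Type} [AddCommGroup G_P] [AddCommGroup G_Q] [AddCommGroup G_R]

/-- The relations defining the pushout `R^gp ⊕_{P^gp} Q^gp` of abelian groups, where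
`G_P = P^gp`, `φ = u^gp : P^gp → Q^gp` and `ψ : P^gp → R^gp`. -/
def pushRel (φ : G_P →+ G_Q) (ψ : G_P →+ G_R) : AddSubgroup (G_R × G_Q) :=
  AddSubgroup.closure {z | ∃ g : G_P, z = (ψ g, -(φ g))}

/-- The pushout `R^gp ⊕_{P^gp} Q^gp` of abelian groups; this is the group completion of the
amalgamated sum `R ⊕_P Q`. -/
def PushK (φ : G_P →+ G_Q) (ψ : G_P →+ G_R) : Type _ := (G_R × G_Q) ⧸ pushRel φ ψ

instance (φ : G_P →+ G_Q) (ψ : G_P →+ G_R) : AddCommGroup (PushK φ ψ) :=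
  QuotientAddGroup.Quotient.addCommGroup (pushRel φ ψ)

/-- The canonical projection onto the pushout of abelian groups. -/
def pushMk (φ : G_P →+ G_Q) (ψ : G_P →+ G_R) : G_R × G_Q →+ PushK φ ψ :=
  QuotientAddGroup.mk' (pushRel φ ψ)

/-- The image of `R ⊕ Q` in the group pushout; this realizes the integralization
`(R ⊕_P Q)^int` of the amalgamated sum. -/
def imageM (Q : AddSubmonoid G_Q) (R : AddSubmonoid G_R)
    (φ : G_P →+ G_Q) (ψ : G_P →+ G_R) : AddSubmonoid (PushK φ ψ) :=
  (R.prod Q).map (pushMk φ ψ)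

/-- The saturation `(R ⊕_P Q)^sat` of the amalgamated sum, realized inside its group
completion (= the pushout of group completions). -/
def satM (Q : AddSubmonoid G_Q) (R : AddSubmonoid G_R)
    (φ : G_P →+ G_Q) (ψ : G_P →+ G_R) : AddSubmonoid (PushK φ ψ) where
  carrier := {a | ∃ n : ℕ, 1 ≤ n ∧ n • a ∈ imageM Q R φ ψ}
  zero_mem' := ⟨1, le_rfl, by simpa using (imageM Q R φ ψ).zero_mem⟩
  add_mem' := by
    rintro a b ⟨n, hn, ha⟩ ⟨m, hm, hb⟩
    refine ⟨n * m, Nat.one_le_iff_ne_zero.mpr (by positivity), ?_⟩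
    have : (n * m) • (a + b) = m • (n • a) + n • (m • b) := by
      rw [smul_add, ← mul_smul, ← mul_smul, mul_comm m n]
    rw [this]
    exact add_mem (nsmul_mem ha m) (nsmul_mem hb n)

/-- The pushout relation subgroup is the range of `ψ.prod (-φ)`. -/
lemma pushRel_eq_range (φ : G_P →+ G_Q) (ψ : G_P →+ G_R) :
    pushRel φ ψ = (ψ.prod (-φ)).range := by
  unfold pushRel
  rw [← AddSubgroup.closure_eq (ψ.prod (-φ)).range]
  congr 1
  ext z
  simp [AddMonoidHom.mem_range, eq_comm, Prod.ext_iff]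

lemma pushMk_rel (φ : G_P →+ G_Q) (ψ : G_P →+ G_R) (r : G_R) (g : G_P) :
    pushMk φ ψ (r + ψ g, 0) = pushMk φ ψ (r, φ g) := by
  have h : ((r + ψ g, 0) : G_R × G_Q) - (r, φ g) ∈ pushRel φ ψ := by
    rw [pushRel_eq_range]
    exact ⟨g, by simp [Prod.ext_iff]⟩
  rw [← sub_eq_zero, ← map_sub]
  exact (QuotientAddGroup.eq_zero_iff _).mpr h

lemma exists_sub_of_closure_top {G : Type} [AddCommGroup G] (P : AddSubmonoid G)
    (h : AddSubgroup.closure (P : Set G) = ⊤) (g : G) :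
    ∃ p₁ ∈ P, ∃ p₂ ∈ P, g = p₁ - p₂ := by
  have hg : g ∈ AddSubgroup.closure (P : Set G) := h ▸ AddSubgroup.mem_top g
  induction hg using AddSubgroup.closure_induction with
  | mem x hx => exact ⟨x, hx, 0, P.zero_mem, by simp⟩
  | zero => exact ⟨0, P.zero_mem, 0, P.zero_mem, by simp⟩
  | add x y hx hy ihx ihy =>
      obtain ⟨a, ha, b, hb, rfl⟩ := ihx
      obtain ⟨c, hc, d, hd, rfl⟩ := ihy
      exact ⟨a + c, P.add_mem ha hc, b + d, P.add_mem hb hd, by abel⟩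
  | neg x hx ih =>
      obtain ⟨a, ha, b, hb, rfl⟩ := ih
      exact ⟨b, hb, a, ha, by abel⟩

/-- Proposition 4.8 (`prop-ket-compos-bc`): if `P → Q` is a Kummer homomorphism of fs monoids
and `P → R` is any homomorphism of fs monoids, then the induced homomorphism
`R → (R ⊕_P Q)^sat` is also Kummer.  All monoids are realized inside their group completions
`G_P = P^gp`, `G_Q = Q^gp`, `G_R = R^gp`, with `φ = u^gp` and `ψ` inducing `P → Q`, `P → R`. -/
theorem stmt7
    (P : AddSubmonoid G_P) (Q : AddSubmonoid G_Q) (R : AddSubmonoid G_R)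
    -- `P`, `Q`, `R` are fs monoids with the indicated group completions
    (hPgen : AddSubgroup.closure (P : Set G_P) = ⊤)
    (hQgen : AddSubgroup.closure (Q : Set G_Q) = ⊤)
    (hRgen : AddSubgroup.closure (R : Set G_R) = ⊤)
    (hPfg : P.FG) (hQfg : Q.FG) (hRfg : R.FG)
    (hPsat : ∀ a : G_P, ∀ n : ℕ, 1 ≤ n → n • a ∈ P → a ∈ P)
    (hQsat : ∀ a : G_Q, ∀ n : ℕ, 1 ≤ n → n • a ∈ Q → a ∈ Q)
    (hRsat : ∀ a : G_R, ∀ n : ℕ, 1 ≤ n → n • a ∈ R → a ∈ R)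
    -- `φ` induces a Kummer homomorphism `P → Q`
    (φ : G_P →+ G_Q) (hφmaps : ∀ p ∈ P, φ p ∈ Q)
    (hφinj : Set.InjOn φ (P : Set G_P))
    (hφdiv : ∀ q ∈ Q, ∃ n : ℕ, 1 ≤ n ∧ ∃ p ∈ P, φ p = n • q)
    (hφfin : Finite (G_Q ⧸ φ.range))
    -- `ψ` induces an arbitrary homomorphism `P → R`
    (ψ : G_P →+ G_R) (hψmaps : ∀ p ∈ P, ψ p ∈ R) :
    -- the induced homomorphism `R → (R ⊕_P Q)^sat` is well defined and Kummer:
    (∀ r ∈ R, pushMk φ ψ (r, 0) ∈ satM Q R φ ψ) ∧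
    -- injective
    (∀ r₁ ∈ R, ∀ r₂ ∈ R, pushMk φ ψ (r₁, 0) = pushMk φ ψ (r₂, 0) → r₁ = r₂) ∧
    -- every element of `(R ⊕_P Q)^sat` has a positive multiple coming from `R`
    (∀ a ∈ satM Q R φ ψ, ∃ n : ℕ, 1 ≤ n ∧ ∃ r ∈ R, n • a = pushMk φ ψ (r, 0)) ∧
    -- the quotient `((R ⊕_P Q)^sat)^gp / R^gp` is finite
    Finite (PushK φ ψ ⧸ ((pushMk φ ψ).comp (AddMonoidHom.inl G_R G_Q)).range) := by
  -- φ is injective as a group homomorphism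
  have hφinjg : ∀ g : G_P, φ g = 0 → g = 0 := by
    intro g hg
    obtain ⟨p₁, hp₁, p₂, hp₂, rfl⟩ := exists_sub_of_closure_top P hPgen g
    have heq : φ p₁ = φ p₂ := sub_eq_zero.mp (by simpa [map_sub] using hg)
    rw [hφinj hp₁ hp₂ heq]; simp
  refine ⟨?_, ?_, ?_, ?_⟩
  · intro r hr
    exact ⟨1, le_rfl, by simpa using ⟨(r, 0), ⟨hr, Q.zero_mem⟩, rfl⟩⟩
  · intro r₁ hr₁ r₂ hr₂ h
    have h' : ((r₁, 0) : G_R × G_Q) - (r₂, 0) ∈ pushRel φ ψ := by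
      have h2 := sub_eq_zero.mpr h
      rw [← map_sub] at h2
      exact (QuotientAddGroup.eq_zero_iff _).mp h2
    rw [pushRel_eq_range] at h'
    obtain ⟨g, hg⟩ := h'
    have hg2 : φ g = 0 := by simpa using congrArg Prod.snd hg
    have hg1 : ψ g = r₁ - r₂ := by simpa using congrArg Prod.fst hg
    have hz : g = 0 := hφinjg g hg2
    rw [hz, map_zero] at hg1
    exact sub_eq_zero.mp hg1.symm
  · rintro a ⟨n, hn, hmem⟩
    obtain ⟨⟨r, q⟩, ⟨hr, hq⟩, hrq⟩ := hmem
    obtain ⟨m, hm, p, hp, hφp⟩ := hφdiv q hq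
    refine ⟨n * m, Nat.one_le_iff_ne_zero.mpr (by positivity), m • r + ψ p,
      R.add_mem (nsmul_mem hr m) (hψmaps p hp), ?_⟩
    have h1 : (n * m) • a = m • (n • a) := by rw [← mul_smul, mul_comm]
    rw [h1, ← hrq, ← map_nsmul]
    have h2 : m • ((r, q) : G_R × G_Q) = (m • r, m • q) := rfl
    rw [h2, ← hφp, ← pushMk_rel]
  · set g0 : G_R × G_Q →+ G_Q ⧸ φ.range :=
      (QuotientAddGroup.mk' φ.range).comp (AddMonoidHom.snd G_R G_Q) with hg0
    have hker : pushRel φ ψ ≤ g0.ker := by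
      rw [pushRel_eq_range]
      rintro _ ⟨g, rfl⟩
      have hmem : g0 ((ψ.prod (-φ)) g) = 0 := by
        show ((-(φ g) : G_Q) : G_Q ⧸ φ.range) = 0
        rw [QuotientAddGroup.eq_zero_iff]
        exact neg_mem ⟨g, rfl⟩
      exact hmem
    let f : PushK φ ψ →+ G_Q ⧸ φ.range :=
      QuotientAddGroup.lift (pushRel φ ψ) g0 hker
    have hsurj : Function.Surjective f := by
      intro y
      obtain ⟨q, rfl⟩ := QuotientAddGroup.mk'_surjective φ.range y
      exact ⟨pushMk φ ψ (0, q), rfl⟩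
    have hkerf : f.ker = ((pushMk φ ψ).comp (AddMonoidHom.inl G_R G_Q)).range := by
      ext x
      constructor
      · intro hx
        obtain ⟨⟨r, q⟩, rfl⟩ := QuotientAddGroup.mk'_surjective (pushRel φ ψ) x
        have hx' : ((q : G_Q) : G_Q ⧸ φ.range) = 0 := hx
        obtain ⟨g, rfl⟩ := (QuotientAddGroup.eq_zero_iff q).mp hx'
        exact ⟨r + ψ g, pushMk_rel φ ψ r g⟩
      · rintro ⟨r, rfl⟩
        show (((0 : G_Q)) : G_Q ⧸ φ.range) = 0
        simp
    have e := QuotientAddGroup.quotientKerEquivOfSurjective f hsurj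
    have hfin : Finite (PushK φ ψ ⧸ f.ker) := Finite.of_equiv _ e.symm.toEquiv
    exact hkerf ▸ hfin

end PushoutSat
end

section
/- Let u : P → Q be a Kummer homomorphism of fine saturated monoids. Then the saturation (Q ⊕_P Q)^sat of the self-amalgamated sum is isomorphic to Q ⊕ G, where G = Q^gp / u^gp(P^gp). -/
section PushoutSat

variable {G_P G_Q G_R : Type} [AddCommGroup G_P] [AddCommGroup G_Q] [AddCommGroup G_R]

section MyAux

variable (φ : G_P →+ G_Q)

/-- The map `(a, b) ↦ (a + b, [b])` on group completions. -/
def ΦAux : G_Q × G_Q →+ G_Q × (G_Q ⧸ φ.range) :=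
  ((AddMonoidHom.fst G_Q G_Q) + (AddMonoidHom.snd G_Q G_Q)).prod
    ((QuotientAddGroup.mk' φ.range).comp (AddMonoidHom.snd G_Q G_Q))

lemma ΦAux_apply (z : G_Q × G_Q) :
    ΦAux φ z = (z.1 + z.2, QuotientAddGroup.mk z.2) := rfl

lemma pushRel_le_ker : pushRel φ φ ≤ (ΦAux φ).ker := by
  rw [pushRel]
  refine (AddSubgroup.closure_le _).2 ?_
  rintro z ⟨g, rfl⟩
  have : ((-(φ g) : G_Q) : G_Q ⧸ φ.range) = 0 :=
    (QuotientAddGroup.eq_zero_iff _).2 ⟨-g, by simp⟩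
  simp [AddMonoidHom.mem_ker, ΦAux_apply, Prod.ext_iff, this]

/-- The descended map on the pushout. -/
def ΦBar : PushK φ φ →+ G_Q × (G_Q ⧸ φ.range) :=
  QuotientAddGroup.lift (pushRel φ φ) (ΦAux φ) (fun z hz => pushRel_le_ker φ hz)

lemma ΦBar_mk (z : G_Q × G_Q) :
    ΦBar φ (pushMk φ φ z) = (z.1 + z.2, QuotientAddGroup.mk z.2) := rfl

lemma ΦBar_bij : Function.Bijective (ΦBar φ) := by
  constructor
  · intro x y hxy
    obtain ⟨z, rfl⟩ := QuotientAddGroup.mk'_surjective (pushRel φ φ) x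
    obtain ⟨w, rfl⟩ := QuotientAddGroup.mk'_surjective (pushRel φ φ) y
    have e1 : ((z.1 + z.2 : G_Q), (QuotientAddGroup.mk z.2 : G_Q ⧸ φ.range)) =
        (w.1 + w.2, QuotientAddGroup.mk w.2) :=
      (ΦBar_mk φ z).symm.trans (hxy.trans (ΦBar_mk φ w))
    have h1 : z.1 + z.2 = w.1 + w.2 := congrArg Prod.fst e1
    have h2 : (QuotientAddGroup.mk z.2 : G_Q ⧸ φ.range) = QuotientAddGroup.mk w.2 :=
      congrArg Prod.snd e1
    rw [QuotientAddGroup.eq_iff_sub_mem] at h2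
    obtain ⟨g, hg⟩ := h2
    have hzw : z - w ∈ pushRel φ φ := by
      have h1' : z.1 - w.1 = φ (-g) := by
        rw [map_neg, hg, neg_sub, sub_eq_sub_iff_add_eq_add, h1, add_comm]
      have h2' : z.2 - w.2 = -(φ (-g)) := by rw [map_neg, neg_neg, hg]
      refine AddSubgroup.subset_closure ⟨-g, ?_⟩
      rw [Prod.ext_iff]
      exact ⟨h1', h2'⟩
    exact (QuotientAddGroup.eq_iff_sub_mem).2 hzw
  · rintro ⟨a, c⟩
    obtain ⟨b, rfl⟩ := QuotientAddGroup.mk_surjective c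
    exact ⟨pushMk φ φ (a - b, b), by rw [ΦBar_mk]; simp⟩

/-- The pushout is isomorphic to `G_Q × (G_Q ⧸ φ.range)`. -/
noncomputable def ΦEquiv : PushK φ φ ≃+ G_Q × (G_Q ⧸ φ.range) :=
  AddEquiv.ofBijective (ΦBar φ) (ΦBar_bij φ)

lemma ΦEquiv_apply (x : PushK φ φ) : ΦEquiv φ x = ΦBar φ x := rfl

lemma mem_satM_iff (Q : AddSubmonoid G_Q)
    (hQsat : ∀ a : G_Q, ∀ n : ℕ, 1 ≤ n → n • a ∈ Q → a ∈ Q)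
    (hφfin : Finite (G_Q ⧸ φ.range)) (x : PushK φ φ) :
    x ∈ satM Q Q φ φ ↔ (ΦBar φ x).1 ∈ Q := by
  constructor
  · rintro ⟨n, hn, ⟨z, hz, hmk⟩⟩
    obtain ⟨hz1, hz2⟩ := hz
    have : ΦBar φ (n • x) = (z.1 + z.2, QuotientAddGroup.mk z.2) := by
      rw [← hmk, ΦBar_mk]
    have h1 : n • (ΦBar φ x).1 = z.1 + z.2 := by
      have := congrArg Prod.fst this
      simpa [map_nsmul] using this
    exact hQsat _ n hn (h1 ▸ add_mem hz1 hz2)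
  · intro h
    obtain ⟨z, rfl⟩ := QuotientAddGroup.mk'_surjective (pushRel φ φ) x
    have hmem : z.1 + z.2 ∈ Q := by
      have heq : (ΦBar φ (pushMk φ φ z)).1 = z.1 + z.2 := congrArg Prod.fst (ΦBar_mk φ z)
      exact heq ▸ h
    set n := Nat.card (G_Q ⧸ φ.range) with hn
    have hnpos : 1 ≤ n := Nat.one_le_iff_ne_zero.mpr
      (Nat.card_ne_zero.mpr ⟨inferInstance, hφfin⟩)
    have hzero : (n • z.2 : G_Q) ∈ φ.range := by
      have h0 : ((n • z.2 : G_Q) : G_Q ⧸ φ.range) = 0 := by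
        have h1 : n • ((z.2 : G_Q) : G_Q ⧸ φ.range) = 0 :=
          card_nsmul_eq_zero' (G := G_Q ⧸ φ.range) (x := ((z.2 : G_Q) : G_Q ⧸ φ.range))
        exact (map_nsmul (QuotientAddGroup.mk' φ.range) n z.2).trans h1
      exact (QuotientAddGroup.eq_zero_iff _).1 h0
    obtain ⟨g, hg⟩ := hzero
    have key : ((n • (z.1 + z.2), (0 : G_Q)) : G_Q × G_Q) = n • z + (φ g, -(φ g)) := by
      rw [Prod.ext_iff]
      constructor
      · show n • (z.1 + z.2) = (n • z).1 + φ g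
        rw [Prod.smul_fst, hg, smul_add]
      · show (0 : G_Q) = (n • z).2 + -(φ g)
        rw [Prod.smul_snd, hg]
        abel
    have hz0 : pushMk φ φ (φ g, -(φ g)) = 0 :=
      (QuotientAddGroup.eq_zero_iff _).2 (AddSubgroup.subset_closure ⟨g, rfl⟩)
    refine ⟨n, hnpos, ⟨(n • (z.1 + z.2), 0), ⟨nsmul_mem hmem n, Q.zero_mem⟩, ?_⟩⟩
    show pushMk φ φ (n • (z.1 + z.2), 0) = n • pushMk φ φ z
    rw [key, map_add, map_nsmul, hz0, add_zero]

/-- The induced isomorphism on the saturated amalgamated sum. -/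
noncomputable def eAux (Q : AddSubmonoid G_Q)
    (hQsat : ∀ a : G_Q, ∀ n : ℕ, 1 ≤ n → n • a ∈ Q → a ∈ Q)
    (hφfin : Finite (G_Q ⧸ φ.range)) :
    satM Q Q φ φ ≃+ (Q × (G_Q ⧸ φ.range)) where
  toFun x := (⟨(ΦBar φ (x : PushK φ φ)).1,
      (mem_satM_iff φ Q hQsat hφfin _).1 x.2⟩, (ΦBar φ (x : PushK φ φ)).2)
  invFun y := ⟨(ΦEquiv φ).symm ((y.1 : G_Q), y.2),
      (mem_satM_iff φ Q hQsat hφfin _).2 (by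
        have : ΦBar φ ((ΦEquiv φ).symm ((y.1 : G_Q), y.2)) = ((y.1 : G_Q), y.2) :=
          (ΦEquiv φ).apply_symm_apply _
        rw [this]
        exact y.1.2)⟩
  left_inv x := by
    apply Subtype.ext
    have : (((ΦBar φ (x : PushK φ φ)).1 : G_Q), (ΦBar φ (x : PushK φ φ)).2) =
        ΦEquiv φ (x : PushK φ φ) := rfl
    simp only [this]
    exact (ΦEquiv φ).symm_apply_apply _
  right_inv y := by
    have h : ΦBar φ ((ΦEquiv φ).symm ((y.1 : G_Q), y.2)) = ((y.1 : G_Q), y.2) :=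
      (ΦEquiv φ).apply_symm_apply _
    have hfst := congrArg Prod.fst h
    have hsnd := congrArg Prod.snd h
    exact Prod.ext (Subtype.ext hfst) hsnd
  map_add' x y := by
    refine Prod.ext (Subtype.ext ?_) ?_
    · simp [map_add]
    · simp [map_add]

end MyAux

/-- Lemma (used in Proposition 4.6, cf. Illusie `lem 3.3`): for a Kummer homomorphism
`u : P → Q` of fine saturated monoids, `(Q ⊕_P Q)^sat ≅ Q ⊕ G` where
`G = Q^gp / u^gp(P^gp)`, via the map induced by `(q₁, q₂) ↦ (q₁ + q₂, [q₂])`.  The monoids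
are realized inside their group completions `G_P = P^gp`, `G_Q = Q^gp`, with `φ = u^gp`. -/
theorem stmt8
    (P : AddSubmonoid G_P) (Q : AddSubmonoid G_Q)
    -- `P`, `Q` are fine saturated with the indicated group completions
    (hPgen : AddSubgroup.closure (P : Set G_P) = ⊤)
    (hQgen : AddSubgroup.closure (Q : Set G_Q) = ⊤)
    (hPfg : P.FG) (hQfg : Q.FG)
    (hPsat : ∀ a : G_P, ∀ n : ℕ, 1 ≤ n → n • a ∈ P → a ∈ P)
    (hQsat : ∀ a : G_Q, ∀ n : ℕ, 1 ≤ n → n • a ∈ Q → a ∈ Q)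
    -- `φ` induces a Kummer homomorphism `P → Q`, with `G := Q^gp / u^gp(P^gp)` finite
    (φ : G_P →+ G_Q) (hφmaps : ∀ p ∈ P, φ p ∈ Q)
    (hφinj : Set.InjOn φ (P : Set G_P))
    (hφdiv : ∀ q ∈ Q, ∃ n : ℕ, 1 ≤ n ∧ ∃ p ∈ P, φ p = n • q)
    (hφfin : Finite (G_Q ⧸ φ.range)) :
    -- `(Q ⊕_P Q)^sat ≅ Q ⊕ G`, via `(q₁, q₂) ↦ (q₁ + q₂, [q₂])`
    ∃ e : satM Q Q φ φ ≃+ (Q × (G_Q ⧸ φ.range)),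
      ∀ (x : satM Q Q φ φ) (q₁ q₂ : G_Q) (h₁ : q₁ ∈ Q) (h₂ : q₂ ∈ Q),
        (x : PushK φ φ) = pushMk φ φ (q₁, q₂) →
          e x = (⟨q₁ + q₂, add_mem h₁ h₂⟩, QuotientAddGroup.mk q₂) := by
  refine ⟨eAux φ Q hQsat hφfin, ?_⟩
  intro x q₁ q₂ h₁ h₂ hx
  have hb : ΦBar φ (x : PushK φ φ) = (q₁ + q₂, QuotientAddGroup.mk q₂) := by
    rw [hx, ΦBar_mk]
  have hfst := congrArg Prod.fst hb
  have hsnd := congrArg Prod.snd hb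
  exact Prod.ext (Subtype.ext hfst) hsnd

end PushoutSat
end

section
/- Let P be a sharp fine saturated monoid, viewed inside P_{ℚ≥0} := colim over n of (1/n)P. For any element χ of P^gp ⊗ ℚ / P^gp lying in ((1/m)P)^gp / P^gp for some m ≥ 1, the fiber π^{-1}(χ) of the projection π : P_{ℚ≥0} → P^gp_ℚ / P^gp is contained in (1/m')P for some integer m' ≥ m, and consequently π^{-1}(χ) = S_χ + P for a finite subset S_χ ⊆ π^{-1}(χ). In particular, each isotypic summand k⁺[P_{ℚ≥0}]_χ of the monoid algebra is a finite module over k⁺[P]. -/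
open Set

/-- Dickson's lemma packaged: every subset of `ι → ℕ` (with `ι` finite) has a finite set of
elements below every other element (its minimal elements). -/
private lemma dickson_aux {ι : Type} [Finite ι] (T : Set (ι → ℕ)) :
    ∃ M : Finset (ι → ℕ), (↑M : Set (ι → ℕ)) ⊆ T ∧ ∀ a ∈ T, ∃ μ ∈ M, μ ≤ a := by
  classical
  set Min : Set (ι → ℕ) := {a | a ∈ T ∧ ∀ b ∈ T, b ≤ a → b = a} with hMin
  have hanti : IsAntichain (· ≤ ·) Min := fun a ha b hb hne hle => hne (hb.2 a ha.1 hle)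
  have hpwo : ∀ s : Set (ι → ℕ), s.IsPWO :=
    fun s => Set.isPWO_of_wellQuasiOrderedLE s
  have hfin : Min.Finite := hanti.finite_of_partiallyWellOrderedOn (hpwo Min)
  refine ⟨hfin.toFinset, ?_, ?_⟩
  · intro a ha
    exact (hfin.mem_toFinset.1 ha).1
  · intro a ha
    set t : Set (ι → ℕ) := {b | b ∈ T ∧ b ≤ a} with ht
    have hwf : t.IsWF := (hpwo t).isWF
    have hne : t.Nonempty := ⟨a, ha, le_refl a⟩
    set μ := hwf.min hne with hμdef
    have hμt : μ ∈ t := hwf.min_mem hne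
    have hμMin : μ ∈ Min := by
      refine ⟨hμt.1, fun b hb hble => ?_⟩
      have hbt : b ∈ t := ⟨hb, le_trans hble hμt.2⟩
      have := hwf.not_lt_min hne hbt
      by_contra hne'
      exact this (lt_of_le_of_ne hble hne')
    exact ⟨μ, hfin.mem_toFinset.2 hμMin, hμt.2⟩

/-- Lemma 6.6 (`lem-k-P-decomp`(2), with the explicit containment from its proof): let `P` be
a sharp fs monoid, realized inside the ℚ-vector space `V = P^gp ⊗ ℚ` with lattice
`Λ = P^gp`, and let `P_{ℚ≥0} = ∪_{n ≥ 1} (1/n)P = {v | n • v ∈ P for some n ≥ 1}`.  For any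
element `χ` of `P^gp_ℚ / P^gp` lying in `((1/m)P)^gp / P^gp` (i.e. with a representative `x₀`
such that `m • x₀ ∈ Λ`), the fiber `π⁻¹(χ) = {v ∈ P_{ℚ≥0} | v - x₀ ∈ Λ}` of
`π : P_{ℚ≥0} → P^gp_ℚ / P^gp` is contained in `(1/m')P` for some `m' ≥ m`, and equals
`S_χ + P` for a finite subset `S_χ ⊆ π⁻¹(χ)`; in particular, each isotypic summand
`k⁺[P_{ℚ≥0}]_χ` is a finite `k⁺[P]`-module. -/
theorem stmt10 {V : Type} [AddCommGroup V] [Module ℚ V]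
    (P : AddSubmonoid V) (Λ : AddSubgroup V)
    -- `Λ = P^gp` and `V = P^gp ⊗ ℚ`
    (hΛ : Λ = AddSubgroup.closure (P : Set V))
    (hspan : Submodule.span ℚ (P : Set V) = ⊤)
    -- `P` is sharp, finitely generated and saturated
    (hsharp : ∀ v ∈ P, -v ∈ P → v = 0)
    (hfg : P.FG)
    (hsat : ∀ v ∈ Λ, ∀ n : ℕ, 1 ≤ n → n • v ∈ P → v ∈ P)
    -- `χ`, represented by `x₀`, lies in `((1/m)P)^gp / P^gp`
    (m : ℕ) (hm : 1 ≤ m) (x₀ : V) (hx₀ : m • x₀ ∈ Λ) :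
    ((∃ m' : ℕ, m ≤ m' ∧
        ∀ v : V, ((∃ n : ℕ, 1 ≤ n ∧ n • v ∈ P) ∧ v - x₀ ∈ Λ) → m' • v ∈ P) ∧
      (∃ S : Finset V,
        (∀ s ∈ S, (∃ n : ℕ, 1 ≤ n ∧ n • s ∈ P) ∧ s - x₀ ∈ Λ) ∧
        ∀ v : V, ((∃ n : ℕ, 1 ≤ n ∧ n • v ∈ P) ∧ v - x₀ ∈ Λ) ↔
          ∃ s ∈ S, ∃ p ∈ P, v = s + p)) := by
  classical
  have hPΛ : ∀ p ∈ P, p ∈ Λ := fun p hp => hΛ ▸ AddSubgroup.subset_closure hp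
  -- the fiber predicate
  set Fp : V → Prop := fun v => (∃ n : ℕ, 1 ≤ n ∧ n • v ∈ P) ∧ v - x₀ ∈ Λ with hFp
  -- Part 1 : elements of the fiber satisfy `m • v ∈ P`
  have key1 : ∀ v : V, Fp v → m • v ∈ P := by
    rintro v ⟨⟨n, hn, hnv⟩, hvΛ⟩
    have h1 : m • v ∈ Λ := by
      have h2 : m • (v - x₀) ∈ Λ := AddSubgroup.nsmul_mem _ hvΛ m
      have h3 : m • v = m • (v - x₀) + m • x₀ := by rw [smul_sub]; abel
      rw [h3]; exact Λ.add_mem h2 hx₀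
    refine hsat _ h1 n hn ?_
    have : n • m • v = m • n • v := by
      rw [smul_smul, smul_smul, Nat.mul_comm]
    rw [this]
    exact AddSubmonoid.nsmul_mem P hnv m
  -- the fiber is closed under adding elements of `P`
  have hFadd : ∀ v, Fp v → ∀ p ∈ P, Fp (v + p) := by
    rintro v hv p hp
    refine ⟨⟨m, hm, ?_⟩, ?_⟩
    · rw [smul_add]
      exact P.add_mem (key1 v hv) (P.nsmul_mem hp m)
    · have : v + p - x₀ = (v - x₀) + p := by abel
      rw [this]
      exact Λ.add_mem hv.2 (hPΛ p hp)
  -- generators of `P`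
  obtain ⟨X, hX⟩ := hfg
  set φ : (X → ℕ) → V := fun c => ∑ x : X, c x • (x : V) with hφdef
  have hXP : ∀ x : X, (x : V) ∈ P := by
    intro x
    rw [← hX]
    exact AddSubmonoid.subset_closure x.2
  have hφP : ∀ c, φ c ∈ P := by
    intro c
    exact AddSubmonoid.sum_mem _ (fun x _ => P.nsmul_mem (hXP x) _)
  have hφadd : ∀ c d, φ (c + d) = φ c + φ d := by
    intro c d
    simp [hφdef, add_smul, Finset.sum_add_distrib]
  have hsurj : ∀ v ∈ P, ∃ c, φ c = v := by
    intro v hv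
    rw [← hX] at hv
    induction hv using AddSubmonoid.closure_induction with
    | mem x hx =>
        refine ⟨Pi.single ⟨x, hx⟩ 1, ?_⟩
        simp [hφdef, Pi.single_apply]
    | zero => exact ⟨0, by simp [hφdef]⟩
    | add a b ha hb iha ihb =>
        obtain ⟨c, hc⟩ := iha
        obtain ⟨d, hd⟩ := ihb
        exact ⟨c + d, by rw [hφadd, hc, hd]⟩
  -- the scaled-down map
  have hmQ : (m : ℚ) ≠ 0 := by positivity
  set ψ : (X → ℕ) → V := fun c => (m : ℚ)⁻¹ • φ c with hψdef
  have hmψ : ∀ c, m • ψ c = φ c := by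
    intro c
    rw [hψdef]
    simp only []
    rw [← Nat.cast_smul_eq_nsmul ℚ, smul_smul, mul_inv_cancel₀ hmQ, one_smul]
  -- decomposition of fiber elements
  have hdecomp : ∀ v : V, m • v ∈ P →
      ∃ r b : X → ℕ, (∀ x, r x < m) ∧ v = ψ r + φ b := by
    intro v hv
    obtain ⟨c, hc⟩ := hsurj _ hv
    refine ⟨fun x => c x % m, fun x => c x / m, fun x => Nat.mod_lt _ hm, ?_⟩
    have h1 : φ c = φ (fun x => c x % m) + m • φ (fun x => c x / m) := by
      rw [hφdef]
      simp only []
      rw [Finset.smul_sum, ← Finset.sum_add_distrib]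
      congr 1
      funext x
      rw [smul_smul, ← add_smul, Nat.mod_add_div]
    have h2 : m • v = m • (ψ (fun x => c x % m) + φ (fun x => c x / m)) := by
      rw [smul_add, hmψ, ← h1, hc]
    have h3 : (m : ℚ) • v = (m : ℚ) • (ψ (fun x => c x % m) + φ (fun x => c x / m)) := by
      rw [Nat.cast_smul_eq_nsmul, Nat.cast_smul_eq_nsmul]; exact h2
    exact smul_right_injective V hmQ h3
  -- the fiber sets over each residue
  set T : (X → ℕ) → Set (X → ℕ) := fun r => {b | Fp (ψ r + φ b)} with hT
  have hTup : ∀ r, ∀ b ∈ T r, ∀ b', b ≤ b' → b' ∈ T r := by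
    intro r b hb b' hle
    have hb'eq : b' = b + (b' - b) := by
      funext x
      exact (Nat.add_sub_cancel' (hle x)).symm
    have hφb' : φ b' = φ b + φ (b' - b) := by rw [← hφadd, ← hb'eq]
    have : ψ r + φ b' = (ψ r + φ b) + φ (b' - b) := by rw [hφb']; abel
    show Fp (ψ r + φ b')
    rw [this]
    exact hFadd _ hb _ (hφP _)
  choose M hM₁ hM₂ using fun r : X → ℕ => dickson_aux (T r)
  -- the finite generating set
  set S : Finset V := Finset.univ.biUnion
      (fun r : X → Fin m =>
        (M (fun x => (r x : ℕ))).image (fun b => ψ (fun x => (r x : ℕ)) + φ b)) with hS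
  have hS₁ : ∀ s ∈ S, Fp s := by
    intro s hs
    rw [hS, Finset.mem_biUnion] at hs
    obtain ⟨r, -, hs⟩ := hs
    rw [Finset.mem_image] at hs
    obtain ⟨b, hb, rfl⟩ := hs
    exact hM₁ _ hb
  refine ⟨⟨m, le_refl m, key1⟩, S, hS₁, fun v => ⟨?_, ?_⟩⟩
  · intro hv
    have hmv : m • v ∈ P := key1 v hv
    obtain ⟨r, b, hrlt, hveq⟩ := hdecomp v hmv
    have hbT : b ∈ T r := by
      show Fp (ψ r + φ b)
      rw [← hveq]; exact hv
    obtain ⟨μ, hμM, hμle⟩ := hM₂ r b hbT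
    set rFin : X → Fin m := fun x => ⟨r x, hrlt x⟩ with hrFin
    have hrEq : (fun x => ((rFin x : ℕ))) = r := by funext x; rfl
    refine ⟨ψ r + φ μ, ?_, φ (b - μ), hφP _, ?_⟩
    · rw [hS, Finset.mem_biUnion]
      refine ⟨rFin, Finset.mem_univ _, ?_⟩
      rw [Finset.mem_image]
      exact ⟨μ, by rw [hrEq]; exact hμM, by rw [hrEq]⟩
    · have hbeq : b = μ + (b - μ) := by
        funext x
        exact (Nat.add_sub_cancel' (hμle x)).symm
      have hφb : φ b = φ μ + φ (b - μ) := by rw [← hφadd, ← hbeq]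
      rw [hveq, hφb]
      abel
  · rintro ⟨s, hs, p, hp, rfl⟩
    exact hFadd s (hS₁ s hs) p hp
end

section
/- Let Γ ≅ Ẑ(1)^n be a profinite group acting on a module M over k⁺/p^n (k⁺ the ring of integers of a nonarchimedean field of characteristic 0 containing all roots of unity) via a primitive character χ : Γ → μ_m. Then the continuous group cohomology H^i(Γ, M) is annihilated by ζ_m − 1 for every i ≥ 0, where ζ_m is any primitive m-th root of unity. -/
set_option linter.unusedSectionVars false
set_option linter.unusedVariables false

section FinAux
variable {n : ℕ} {β : Type*}

lemma insertNth_succ' (j : Fin (n + 1)) (a : β) (x : Fin (n + 1) → β) :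
    Fin.insertNth (α := fun _ => β) j.succ a x
      = Fin.cons (x 0) (Fin.insertNth j a (Fin.tail x)) := by
  funext i
  induction i using Fin.cases with
  | zero =>
      have h0 : j.succ.succAbove 0 = 0 := by
        rw [← Fin.castSucc_zero (n := n + 1)]
        exact Fin.succAbove_of_castSucc_lt _ _ (by simp [Fin.lt_def])
      rw [← h0, Fin.insertNth_apply_succAbove]
      simp
  | succ k =>
      rw [Fin.cons_succ]
      refine Fin.succAboveCases j ?_ ?_ k
      · simp
      · intro l
        rw [← Fin.succ_succAbove_succ, Fin.insertNth_apply_succAbove,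
          Fin.insertNth_apply_succAbove]
        rfl

lemma contractNth_succ' (j : Fin (n + 1)) (op : β → β → β) (x : Fin (n + 2) → β) :
    Fin.contractNth j.succ op x = Fin.cons (x 0) (Fin.contractNth j op (Fin.tail x)) := by
  funext k
  induction k using Fin.cases with
  | zero =>
      rw [Fin.contractNth_apply_of_lt]
      · rfl
      · simp
  | succ k =>
      rw [Fin.cons_succ]
      rcases lt_trichotomy (k : ℕ) (j : ℕ) with h | h | h
      · rw [Fin.contractNth_apply_of_lt _ _ _ _ (by simpa using h),
          Fin.contractNth_apply_of_lt _ _ _ _ h]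
        simp [Fin.tail]
      · rw [Fin.contractNth_apply_of_eq _ _ _ _ (by simpa using h),
          Fin.contractNth_apply_of_eq _ _ _ _ h]
        simp [Fin.tail]
      · rw [Fin.contractNth_apply_of_gt _ _ _ _ (by simpa using h),
          Fin.contractNth_apply_of_gt _ _ _ _ h]
        rfl

lemma contractNth_zero' (op : β → β → β) (x : Fin (n + 2) → β) :
    Fin.contractNth 0 op x = Fin.cons (op (x 0) (x 1)) (Fin.tail (Fin.tail x)) := by
  funext k
  induction k using Fin.cases with
  | zero =>
      rw [Fin.contractNth_apply_of_eq _ _ _ _ (by simp)]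
      rfl
  | succ k =>
      rw [Fin.contractNth_apply_of_gt _ _ _ _ (by simp)]
      rfl

lemma cons_one' {n : ℕ} {β : Type*} (a : β) (y : Fin (n + 1) → β) :
    (Fin.cons a y : Fin (n + 2) → β) 1 = y 0 := rfl
end FinAux

section Homotopy
variable {O M G : Type*} [CommRing O] [AddCommGroup M] [Module O M] [CommGroup G]

def DD (c : G → O) (n : ℕ) (f : (Fin n → G) → M) : (Fin (n + 1) → G) → M :=
  fun x => c (x 0) • f (Fin.tail x)
    + ∑ j : Fin (n + 1), (-1 : O) ^ ((j : ℕ) + 1) • f (Fin.contractNth j (· * ·) x)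

def ss (g : G) (n : ℕ) (f : (Fin (n + 1) → G) → M) : (Fin n → G) → M :=
  fun x => ∑ j : Fin (n + 1), (-1 : O) ^ (j : ℕ) • f (Fin.insertNth j g x)

variable (c : G → O) (g : G)

lemma ss_succ (n : ℕ) (h : (Fin (n + 2) → G) → M) (x : Fin (n + 1) → G) :
    ss (O := O) g (n + 1) h x
      = h (Fin.cons g x) - ss (O := O) g n (fun y => h (Fin.cons (x 0) y)) (Fin.tail x) := by
  unfold ss
  rw [Fin.sum_univ_succ]
  simp only [Fin.insertNth_zero', Fin.val_zero, pow_zero, one_smul, insertNth_succ',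
    Fin.val_succ, pow_succ, mul_comm _ (-1 : O), neg_smul, one_smul, neg_mul, mul_smul,
    Finset.sum_neg_distrib]
  abel

lemma DD_succ (n : ℕ) (h : (Fin (n + 1) → G) → M) (x : Fin (n + 2) → G) :
    DD c (n + 1) h x
      = c (x 0) • h (Fin.tail x)
        - h (Fin.cons (x 0 * x 1) (Fin.tail (Fin.tail x)))
        - DD c n (fun y => h (Fin.cons (x 0) y)) (Fin.tail x)
        + c (x 1) • h (Fin.cons (x 0) (Fin.tail (Fin.tail x))) := by
  unfold DD
  rw [Fin.sum_univ_succ]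
  simp only [contractNth_zero', contractNth_succ', Fin.val_zero, zero_add, pow_one, neg_smul,
    one_smul, Fin.val_succ, Fin.tail_cons, Fin.cons_zero]
  have h2 : ∀ j : Fin (n + 1), (-1 : O) ^ ((j : ℕ) + 1 + 1) = -(-1 : O) ^ ((j : ℕ) + 1) := by
    intro j; rw [pow_succ]; ring
  simp only [h2, neg_smul, Finset.sum_neg_distrib]
  have ht : Fin.tail x 0 = x 1 := rfl
  rw [ht]
  abel

lemma DD_sub (n : ℕ) (F H : (Fin n → G) → M) (x : Fin (n + 1) → G) :
    DD c n (fun y => F y - H y) x = DD c n F x - DD c n H x := by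
  unfold DD
  simp only [smul_sub, Finset.sum_sub_distrib]
  abel

lemma ss_add (n : ℕ) (F H : (Fin (n + 1) → G) → M) (x : Fin n → G) :
    ss (O := O) g n (fun y => F y + H y) x = ss (O := O) g n F x + ss (O := O) g n H x := by
  unfold ss
  simp only [smul_add, Finset.sum_add_distrib]

lemma ss_sub (n : ℕ) (F H : (Fin (n + 1) → G) → M) (x : Fin n → G) :
    ss (O := O) g n (fun y => F y - H y) x = ss (O := O) g n F x - ss (O := O) g n H x := by
  unfold ss
  simp only [smul_sub, Finset.sum_sub_distrib]

lemma ss_smul_const (n : ℕ) (a : O) (F : (Fin (n + 1) → G) → M) (x : Fin n → G) :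
    ss (O := O) g n (fun y => a • F y) x = a • ss (O := O) g n F x := by
  unfold ss
  rw [Finset.smul_sum]
  exact Finset.sum_congr rfl fun j _ => smul_comm _ _ _

theorem homotopy_id (n : ℕ) (f : (Fin (n + 1) → G) → M) (x : Fin (n + 1) → G) :
    DD c n (ss (O := O) g n f) x + ss (O := O) g (n + 1) (DD c (n + 1) f) x
      = c g • f x - f x := by
  induction n with
  | zero =>
    have h1t : ∀ (u v : Fin 1 → G), u 0 = v 0 → u = v := by
      intro u v h
      funext i
      rw [Subsingleton.elim i 0, h]
    have e0 : ∀ (u v : Fin 0 → G), u = v := fun u v => funext fun i => i.elim0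
    have hDD0 : ∀ (h : (Fin 0 → G) → M) (z : Fin 1 → G),
        DD c 0 h z = c (z 0) • h (Fin.tail z) - h (Fin.tail z) := by
      intro h z
      unfold DD
      rw [Fin.sum_univ_one, e0 (Fin.contractNth 0 (· * ·) z) (Fin.tail z)]
      norm_num
      abel
    have hss0 : ∀ (h : (Fin 1 → G) → M) (z : Fin 0 → G),
        ss (O := O) g 0 h z = h (fun _ => g) := by
      intro h z
      unfold ss
      rw [Fin.sum_univ_one]
      rw [show (Fin.insertNth (0 : Fin 1) g z : Fin 1 → G) = fun _ => g from
        h1t _ _ (by simp [Fin.insertNth_zero'])]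
      norm_num
    have hDD1 : ∀ (z : Fin 2 → G), DD c 1 f z
        = c (z 0) • f (Fin.tail z) - f (Fin.cons (z 0 * z 1) (Fin.tail (Fin.tail z)))
          + f (Fin.cons (z 0) (Fin.tail (Fin.tail z))) := by
      intro z
      rw [DD_succ c 0 f z, hDD0]
      have ht : Fin.tail z 0 = z 1 := rfl
      rw [ht]
      try abel
    rw [hDD0, hss0, ss_succ, hss0, hDD1, hDD1]
    simp only [Fin.cons_zero, cons_one', Fin.tail_cons]
    rw [show Fin.cons g (Fin.tail x) = (fun _ => g : Fin 1 → G) from h1t _ _ rfl,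
      show Fin.cons (x 0) (Fin.tail (fun _ => g : Fin 1 → G)) = x from h1t _ _ rfl,
      show Fin.cons (x 0 * g) (Fin.tail (fun _ => g : Fin 1 → G))
          = Fin.cons (g * x 0) (Fin.tail x) from h1t _ _ (by simp [mul_comm])]
    abel
  | succ n ih =>
    have hb : Fin.tail x 0 = x 1 := rfl
    -- expansion of the inner lambda appearing in the first summand
    have hT3fun : (fun y => ss (O := O) g (n + 1) f (Fin.cons (x 0) y))
        = fun y => f (Fin.cons g (Fin.cons (x 0) y))
            - ss (O := O) g n (fun z => f (Fin.cons (x 0) z)) y := by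
      funext y
      rw [ss_succ]
      simp only [Fin.cons_zero, Fin.tail_cons]
    -- expansion of the inner lambda appearing in the second summand
    have hB2fun : (fun y => DD c (n + 2) f (Fin.cons (x 0) y))
        = fun y => (c (x 0) • f y
            - f (Fin.cons (x 0 * y 0) (Fin.tail y))
            - DD c (n + 1) (fun z => f (Fin.cons (x 0) z)) y)
            + c (y 0) • f (Fin.cons (x 0) (Fin.tail y)) := by
      funext y
      rw [DD_succ]
      simp only [Fin.cons_zero, cons_one', Fin.tail_cons]
    -- first summand
    have h1 : DD c (n + 1) (ss (O := O) g (n + 1) f) x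
        = c (x 0) • ss (O := O) g (n + 1) f (Fin.tail x)
          - (f (Fin.cons g (Fin.cons (x 0 * x 1) (Fin.tail (Fin.tail x))))
              - ss (O := O) g n (fun y => f (Fin.cons (x 0 * x 1) y)) (Fin.tail (Fin.tail x)))
          - (DD c n (fun y => f (Fin.cons g (Fin.cons (x 0) y))) (Fin.tail x)
              - DD c n (ss (O := O) g n (fun z => f (Fin.cons (x 0) z))) (Fin.tail x))
          + c (x 1) • (f (Fin.cons g (Fin.cons (x 0) (Fin.tail (Fin.tail x))))
              - ss (O := O) g n (fun y => f (Fin.cons (x 0) y)) (Fin.tail (Fin.tail x))) := by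
      rw [DD_succ, hT3fun, DD_sub,
        ss_succ g n f (Fin.cons (x 0 * x 1) (Fin.tail (Fin.tail x))),
        ss_succ g n f (Fin.cons (x 0) (Fin.tail (Fin.tail x)))]
      simp only [Fin.cons_zero, Fin.tail_cons]
    -- second summand
    have hih : ss (O := O) g (n + 1) (DD c (n + 1) (fun z => f (Fin.cons (x 0) z))) (Fin.tail x)
        = c g • f x - f x
          - DD c n (ss (O := O) g n (fun z => f (Fin.cons (x 0) z))) (Fin.tail x) := by
      have h := ih (fun z => f (Fin.cons (x 0) z)) (Fin.tail x)
      rw [Fin.cons_self_tail] at h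
      exact eq_sub_of_add_eq' h
    have h2 : ss (O := O) g (n + 2) (DD c (n + 2) f) x
        = (c g • f x - f (Fin.cons (g * x 0) (Fin.tail x))
            - (c (x 0) • f (Fin.cons g (Fin.tail x))
                - f (Fin.cons g (Fin.cons (x 0 * x 1) (Fin.tail (Fin.tail x))))
                - DD c n (fun y => f (Fin.cons g (Fin.cons (x 0) y))) (Fin.tail x)
                + c (x 1) • f (Fin.cons g (Fin.cons (x 0) (Fin.tail (Fin.tail x)))))
            + c (x 0) • f (Fin.cons g (Fin.tail x)))
          - (c (x 0) • ss (O := O) g (n + 1) f (Fin.tail x)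
              - (f (Fin.cons (x 0 * g) (Fin.tail x))
                  - ss (O := O) g n (fun z => f (Fin.cons (x 0 * x 1) z)) (Fin.tail (Fin.tail x)))
              - (c g • f x - f x
                  - DD c n (ss (O := O) g n (fun z => f (Fin.cons (x 0) z))) (Fin.tail x))
              + (c g • f x
                  - c (x 1) • ss (O := O) g n (fun z => f (Fin.cons (x 0) z))
                      (Fin.tail (Fin.tail x)))) := by
      rw [ss_succ g (n + 1) (DD c (n + 2) f) x]
      rw [DD_succ c (n + 1) f (Fin.cons g x)]
      rw [hB2fun]
      rw [ss_add, ss_sub, ss_sub, ss_smul_const]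
      rw [ss_succ g n (fun y => f (Fin.cons (x 0 * y 0) (Fin.tail y))) (Fin.tail x)]
      rw [ss_succ g n (fun y => c (y 0) • f (Fin.cons (x 0) (Fin.tail y))) (Fin.tail x)]
      rw [hih]
      simp only [Fin.cons_zero, cons_one', Fin.tail_cons, hb, Fin.cons_self_tail]
      rw [ss_smul_const, DD_succ c n (fun y => f (Fin.cons g y)) x]
      try simp only [Fin.cons_zero, cons_one', Fin.tail_cons, hb, Fin.cons_self_tail]
    rw [h1, h2, mul_comm (x 0) g]
    simp only [smul_sub]
    abel

lemma DD_zero_eval (h : (Fin 0 → G) → M) (z : Fin 1 → G) :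
    DD c 0 h z = c (z 0) • h (Fin.tail z) - h (Fin.tail z) := by
  unfold DD
  rw [Fin.sum_univ_one,
    show Fin.contractNth 0 (· * ·) z = Fin.tail z from funext fun i => i.elim0]
  norm_num
  abel

lemma DD_ss_of_cocycle (n : ℕ) (f : (Fin (n + 1) → G) → M)
    (hf : DD c (n + 1) f = 0) :
    DD c n (ss (O := O) g n f) = fun x => c g • f x - f x := by
  funext x
  have h := homotopy_id c g n f x
  rw [hf] at h
  simpa [ss] using h

end Homotopy

/-- The representation of a group `G` on a module `M` over `O` in which `g` acts by
multiplication by the unit `χ g`, for a character `χ : G → Oˣ`. -/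
noncomputable def charRep {K : Type} [Field K] (O : Subring K) {M : Type} [AddCommGroup M]
    [Module O M] {G : Type} [Group G] (χ : G →* Oˣ) : Rep O G :=
  Rep.of
    { toFun := fun g => ((χ g : O) • (LinearMap.id : M →ₗ[O] M))
      map_one' := by
        ext x; simp
      map_mul' := by
        intro g h
        ext x
        simp [mul_smul, smul_comm ((χ g : O)) ((χ h : O))] }


section Glue
open groupCohomology CategoryTheory

variable {K : Type} [Field K] (O : Subring K) {M : Type} [AddCommGroup M] [Module O M]
variable {G : Type} [CommGroup G]

lemma charRep_d_eq (χ : G →* Oˣ) (n : ℕ) (f : (Fin n → G) → M) :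
    (inhomogeneousCochains.d (charRep O χ (M := M)) n).hom f
      = DD (fun h => ((χ h : Oˣ) : O)) n f := rfl

lemma charRep_cohomology_annih (χ : G →* Oˣ) (g₀ : G) (i : ℕ)
    (y : groupCohomology (charRep O χ (M := M)) i) :
    (((χ g₀ : Oˣ) : O) - 1) • y = 0 := by
  revert y; unfold groupCohomology; intro y
  set c : G → ↥O := fun h => ((χ h : Oˣ) : O) with hc
  have hsurj : Function.Surjective ((inhomogeneousCochains (charRep O χ (M := M))).homologyπ i) :=
    (ModuleCat.epi_iff_surjective _).mp inferInstance
  obtain ⟨x, hx⟩ := hsurj y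
  have hms := map_smul ((inhomogeneousCochains (charRep O χ (M := M))).homologyπ i).hom
    (((χ g₀ : Oˣ) : O) - 1) x
  rw [← hx, ← hms]
  have hmono : ∀ j, Function.Injective ((inhomogeneousCochains (charRep O χ (M := M))).iCycles j) := fun j =>
    (ModuleCat.mono_iff_injective _).mp inferInstance
  have hcocycle : DD c i ((inhomogeneousCochains (charRep O χ (M := M))).iCycles i x) = 0 := by
    have h0 : (inhomogeneousCochains (charRep O χ (M := M))).iCycles i ≫ (inhomogeneousCochains (charRep O χ (M := M))).d i (i + 1) = 0 :=
      (inhomogeneousCochains (charRep O χ (M := M))).iCycles_d i (i + 1)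
    have h1 := ConcreteCategory.congr_hom h0 x
    rw [ConcreteCategory.comp_apply] at h1
    rw [inhomogeneousCochains.d_def] at h1
    rw [← charRep_d_eq O χ i ((inhomogeneousCochains (charRep O χ (M := M))).iCycles i x)]
    exact h1
  cases i with
  | zero =>
      suffices h : (c g₀ - 1) • x = 0 by rw [h, map_zero]
      apply hmono 0
      rw [map_smul, map_zero]
      set cx : (Fin 0 → G) → M := (inhomogeneousCochains (charRep O χ (M := M))).iCycles 0 x with hcx
      have hval := congrFun hcocycle (fun _ => g₀)
      rw [DD_zero_eval] at hval
      show (c g₀ - 1) • cx = (0 : (Fin 0 → G) → M)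
      funext u
      have hu : u = Fin.tail (fun _ => g₀ : Fin 1 → G) := funext fun j => j.elim0
      show (c g₀ - 1) • cx u = (0 : M)
      rw [hu, sub_smul, one_smul]
      exact hval
  | succ n =>
      set cx : (Fin (n + 1) → G) → M := (inhomogeneousCochains (charRep O χ (M := M))).iCycles (n + 1) x with hcx
      set w : (Fin n → G) → M := ss (O := O) g₀ n cx with hwdef
      have hdw : (inhomogeneousCochains (charRep O χ (M := M))).d n (n + 1) w = (c g₀ - 1) • cx := by
        rw [inhomogeneousCochains.d_def]
        show DD c n w = (c g₀ - 1) • cx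
        have e2 := DD_ss_of_cocycle (O := ↥O) (M := M) (G := G) c g₀ n cx hcocycle
        rw [hwdef, e2]
        funext z
        show c g₀ • cx z - cx z = ((c g₀ - 1) • cx) z
        rw [show ((c g₀ - 1) • cx) z = (c g₀ - 1) • cx z from rfl, sub_smul, one_smul]
      have hw : (inhomogeneousCochains (charRep O χ (M := M))).toCycles n (n + 1) w = (c g₀ - 1) • x := by
        apply hmono (n + 1)
        rw [map_smul]
        have h2 := ConcreteCategory.congr_hom ((inhomogeneousCochains (charRep O χ (M := M))).toCycles_i n (n + 1)) w
        erw [ConcreteCategory.comp_apply] at h2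
        rw [h2, hdw]
        rfl
      rw [← hw]
      have h3 := ConcreteCategory.congr_hom
        ((inhomogeneousCochains (charRep O χ (M := M))).toCycles_comp_homologyπ n (n + 1)) w
      erw [ConcreteCategory.comp_apply] at h3
      exact h3

end Glue

/-- Lemma 6.7 (`lem-Gal-coh-afg`, first part): let `Γ ≅ Ẑ(1)^r` act on a module `M` over
`k⁺/p^n` via a primitive character `χ : Γ → μ_m`, where `k⁺ = O` is the ring of integers of a
nonarchimedean field of characteristic zero containing all roots of unity.  Then the
(continuous) group cohomology `H^i(Γ, M)`, computed via the Koszul complex on topological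
generators — equivalently, the group cohomology of `ℤ^r` — is annihilated by `ζ_m − 1` for
every primitive `m`-th root of unity `ζ_m` and every `i ≥ 0`. -/
theorem stmt11 {K : Type} [Field K] [CharZero K] (O : Subring K)
    (p nlev m r : ℕ) [Fact p.Prime] (hm : 1 ≤ m)
    {M : Type} [AddCommGroup M] [Module O M]
    -- `M` is a module over `k⁺ / p^nlev`
    (hM : ∀ x : M, ((p : O) ^ nlev) • x = 0)
    -- the character `χ` of `Γ ≅ Ẑ(1)^r`, of order `m` and primitive
    (χ : Multiplicative (Fin r → ℤ) →* Oˣ)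
    (hχord : ∀ g, χ g ^ m = 1)
    (hχprim : ∃ g₀, IsPrimitiveRoot ((χ g₀ : Oˣ) : O) m)
    -- `ζ` is any primitive `m`-th root of unity
    (ζ : O) (hζ : IsPrimitiveRoot ζ m) (i : ℕ)
    (y : groupCohomology (charRep O χ (M := M)) i) :
    (ζ - 1) • y = 0 := by
  obtain ⟨g₀, hg₀⟩ := hχprim
  haveI : NeZero m := ⟨by omega⟩
  obtain ⟨t, -, ht⟩ := hg₀.eq_pow_of_pow_eq_one hζ.pow_eq_one
  obtain ⟨u, hu⟩ : ((χ g₀ : Oˣ) : O) - 1 ∣ ζ - 1 := by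
    rw [← ht]
    simpa using sub_dvd_pow_sub_pow ((χ g₀ : Oˣ) : O) 1 t
  rw [hu, mul_comm, mul_smul, charRep_cohomology_annih O χ g₀ i y, smul_zero]
end
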